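/- Fix M > 0 and (E, ℓ) with √(8/9) < E < 1 and ℓ_lb(E) < ℓ < ℓ_ub(E). Let r₁ be the middle root of the equation E_ℓ^Sch(r) = E², i.e. the unique solution lying in (r_max^Sch(ℓ), r_min^Sch(ℓ)). Then r₁ > 4M. -/

import Mathlib

/-- The Schwarzschild effective potential `E_ℓ^Sch(r) = (1 - 2M/r)(1 + ℓ/r²)`. -/
noncomputable def Esch (M ℓ r : ℝ) : ℝ := (1 - 2*M/r) * (1 + ℓ/r^2)

/-- `r_max^Sch(ℓ)`, the location of the maximum of the effective potential. -/
noncomputable def rmaxSch (M ℓ : ℝ) : ℝ := ℓ/(2*M) * (1 - Real.sqrt (1 - 12*M^2/ℓ))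

/-- `r_min^Sch(ℓ)`, the location of the minimum of the effective potential. -/
noncomputable def rminSch (M ℓ : ℝ) : ℝ := ℓ/(2*M) * (1 + Real.sqrt (1 - 12*M^2/ℓ))

/-- `ℓ_lb(E) = 12M²/(1 - 4α - 8α² + 8α√(α² + α))` with `α = (9/8)E² - 1`. -/
noncomputable def llb (M E : ℝ) : ℝ :=
  12*M^2 / (1 - 4*(9/8*E^2-1) - 8*(9/8*E^2-1)^2
    + 8*(9/8*E^2-1)*Real.sqrt ((9/8*E^2-1)^2 + (9/8*E^2-1)))

/-- `ℓ_ub(E) = 12M²/(1 - 4α - 8α² - 8α√(α² + α))` with `α = (9/8)E² - 1`. -/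
noncomputable def lub (M E : ℝ) : ℝ :=
  12*M^2 / (1 - 4*(9/8*E^2-1) - 8*(9/8*E^2-1)^2
    - 8*(9/8*E^2-1)*Real.sqrt ((9/8*E^2-1)^2 + (9/8*E^2-1)))

/-!
On `(r_max, r_min)` the effective potential is strictly decreasing, since
`r⁴ (E_ℓ^Sch)'(r) / 2 = M r² - ℓ r + 3Mℓ = M (r - r_max)(r - r_min)`.
Moreover `r_min ≥ ℓ/(2M) > 6M`. So if `r₁ ≤ 4M`, then `4M` lies in `(r_max, r_min)`, which forces
`ℓ > 16M²`, and then `E_ℓ^Sch(4M) = (16M² + ℓ)/(32M²) > 1 > E² = E_ℓ^Sch(r₁)`, against monotonicity.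
-/

section

variable {M ℓ : ℝ}

lemma twelve_mul_sq_lt_of_rmaxSch_lt_rminSch (hM : 0 < M)
    (h : rmaxSch M ℓ < rminSch M ℓ) : 12 * M ^ 2 < ℓ := by
  have hdiff : rminSch M ℓ - rmaxSch M ℓ = ℓ / M * Real.sqrt (1 - 12 * M ^ 2 / ℓ) := by
    unfold rminSch rmaxSch
    field_simp
    ring
  have hpos : 0 < ℓ / M * Real.sqrt (1 - 12 * M ^ 2 / ℓ) := hdiff ▸ sub_pos.mpr h
  have hℓ : 0 < ℓ := by
    by_contra! hℓ
    exact hpos.not_ge (mul_nonpos_of_nonpos_of_nonneg (div_nonpos_of_nonpos_of_nonneg hℓ hM.le)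
      (Real.sqrt_nonneg _))
  have hs : 0 < 1 - 12 * M ^ 2 / ℓ := Real.sqrt_pos.mp (pos_of_mul_pos_right hpos (by positivity))
  rwa [sub_pos, div_lt_one hℓ] at hs

lemma rmaxSch_add_rminSch (hM : M ≠ 0) : rmaxSch M ℓ + rminSch M ℓ = ℓ / M := by
  unfold rmaxSch rminSch
  field_simp
  ring

lemma rmaxSch_mul_rminSch (hM : 0 < M) (hℓ : 12 * M ^ 2 < ℓ) :
    rmaxSch M ℓ * rminSch M ℓ = 3 * ℓ := by
  have hℓ0 : 0 < ℓ := lt_trans (by positivity) hℓ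
  have hs : Real.sqrt (1 - 12 * M ^ 2 / ℓ) ^ 2 = 1 - 12 * M ^ 2 / ℓ := by
    refine Real.sq_sqrt (sub_nonneg.mpr ?_)
    rw [div_le_one hℓ0]
    exact hℓ.le
  unfold rmaxSch rminSch
  calc ℓ / (2 * M) * (1 - Real.sqrt (1 - 12 * M ^ 2 / ℓ)) *
        (ℓ / (2 * M) * (1 + Real.sqrt (1 - 12 * M ^ 2 / ℓ)))
      = (ℓ / (2 * M)) ^ 2 * (1 - Real.sqrt (1 - 12 * M ^ 2 / ℓ) ^ 2) := by ring
    _ = 3 * ℓ := by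
      rw [hs]
      field_simp
      ring

lemma mul_sq_sub_mul_add_eq_mul_sub_rmaxSch_mul_sub_rminSch (hM : 0 < M) (hℓ : 12 * M ^ 2 < ℓ)
    (r : ℝ) :
    M * r ^ 2 - ℓ * r + 3 * M * ℓ = M * (r - rmaxSch M ℓ) * (r - rminSch M ℓ) := by
  have hsum := rmaxSch_add_rminSch (ℓ := ℓ) hM.ne'
  have hprod := rmaxSch_mul_rminSch hM hℓ
  calc M * r ^ 2 - ℓ * r + 3 * M * ℓ
      = M * r ^ 2 - M * (ℓ / M) * r + M * (3 * ℓ) := by field_simp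
    _ = M * (r - rmaxSch M ℓ) * (r - rminSch M ℓ) := by rw [← hsum, ← hprod]; ring

lemma rmaxSch_pos (hM : 0 < M) (hℓ : 12 * M ^ 2 < ℓ) : 0 < rmaxSch M ℓ := by
  have hℓ0 : 0 < ℓ := lt_trans (by positivity) hℓ
  have hsum : 0 < rmaxSch M ℓ + rminSch M ℓ := by
    rw [rmaxSch_add_rminSch hM.ne']
    positivity
  have hprod : 0 < rmaxSch M ℓ * rminSch M ℓ := by
    rw [rmaxSch_mul_rminSch hM hℓ]
    positivity
  by_contra! h
  nlinarith

lemma six_mul_lt_rminSch (hM : 0 < M) (hℓ : 12 * M ^ 2 < ℓ) : 6 * M < rminSch M ℓ := by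
  have hℓ0 : 0 < ℓ := lt_trans (by positivity) hℓ
  have hhalf : ℓ / (2 * M) ≤ rminSch M ℓ := by
    unfold rminSch
    have : 0 ≤ ℓ / (2 * M) := by positivity
    nlinarith [Real.sqrt_nonneg (1 - 12 * M ^ 2 / ℓ)]
  refine lt_of_lt_of_le ?_ hhalf
  rw [lt_div_iff₀ (by positivity)]
  nlinarith

lemma Esch_sub_Esch_mul {r t : ℝ} (hr : r ≠ 0) (ht : t ≠ 0) :
    (Esch M ℓ r - Esch M ℓ t) * (r ^ 3 * t ^ 3) =
      (t - r) * (M * ℓ * (r - t) ^ 2 -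
        (t ^ 2 * (M * r ^ 2 - ℓ * r + 3 * M * ℓ) + r ^ 2 * (M * t ^ 2 - ℓ * t + 3 * M * ℓ))) := by
  unfold Esch
  field_simp
  ring

lemma Esch_four_mul (hM : M ≠ 0) : Esch M ℓ (4 * M) = (16 * M ^ 2 + ℓ) / (32 * M ^ 2) := by
  unfold Esch
  field_simp
  ring

lemma Esch_strictAntiOn (hM : 0 < M) (hℓ : 12 * M ^ 2 < ℓ) :
    StrictAntiOn (Esch M ℓ) (Set.Icc (rmaxSch M ℓ) (rminSch M ℓ)) := by
  intro r hr t ht hrt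
  have hquad := mul_sq_sub_mul_add_eq_mul_sub_rmaxSch_mul_sub_rminSch hM hℓ
  have hqr : M * r ^ 2 - ℓ * r + 3 * M * ℓ ≤ 0 := by
    rw [hquad]
    exact mul_nonpos_of_nonneg_of_nonpos (by nlinarith [hr.1]) (by linarith [hr.2])
  have hqt : M * t ^ 2 - ℓ * t + 3 * M * ℓ ≤ 0 := by
    rw [hquad]
    exact mul_nonpos_of_nonneg_of_nonpos (by nlinarith [ht.1]) (by linarith [ht.2])
  have hr0 : 0 < r := (rmaxSch_pos hM hℓ).trans_le hr.1
  have ht0 : 0 < t := hr0.trans hrt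
  have hrhs : 0 < (t - r) * (M * ℓ * (r - t) ^ 2 -
      (t ^ 2 * (M * r ^ 2 - ℓ * r + 3 * M * ℓ) + r ^ 2 * (M * t ^ 2 - ℓ * t + 3 * M * ℓ))) := by
    have hgap : 0 < M * ℓ * (r - t) ^ 2 := by
      have : 0 < ℓ := lt_trans (by positivity) hℓ
      have : 0 < (r - t) ^ 2 := by nlinarith
      positivity
    refine mul_pos (sub_pos.mpr hrt) ?_
    nlinarith [mul_nonpos_of_nonneg_of_nonpos (sq_nonneg t) hqr,
      mul_nonpos_of_nonneg_of_nonpos (sq_nonneg r) hqt]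
  rw [← Esch_sub_Esch_mul hr0.ne' ht0.ne'] at hrhs
  exact sub_pos.mp (pos_of_mul_pos_left hrhs (by positivity))

end

theorem stmt14_general (M ℓ E r1 : ℝ) (hM : 0 < M)
    (hE1 : Real.sqrt (8/9) < E) (hE2 : E < 1)
    (hr1a : rmaxSch M ℓ < r1) (hr1b : r1 < rminSch M ℓ)
    (hroot : Esch M ℓ r1 = E^2) :
    4*M < r1 := by
  by_contra! h
  have hℓ := twelve_mul_sq_lt_of_rmaxSch_lt_rminSch hM (hr1a.trans hr1b)
  have h4M : 4 * M < rminSch M ℓ := by linarith [six_mul_lt_rminSch hM hℓ]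
  have hℓ16 : 16 * M ^ 2 < ℓ := by
    have hq : M * (4 * M) ^ 2 - ℓ * (4 * M) + 3 * M * ℓ < 0 := by
      rw [mul_sq_sub_mul_add_eq_mul_sub_rmaxSch_mul_sub_rminSch hM hℓ]
      exact mul_neg_of_pos_of_neg (by nlinarith) (by linarith)
    nlinarith
  have hE : E ^ 2 < 1 := by nlinarith [Real.sqrt_nonneg (8/9)]
  have hmono : Esch M ℓ (4 * M) ≤ Esch M ℓ r1 :=
    (Esch_strictAntiOn hM hℓ).antitoneOn ⟨hr1a.le, hr1b.le⟩ ⟨by linarith, h4M.le⟩ h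
  have hfour : 1 < Esch M ℓ (4 * M) := by
    rw [Esch_four_mul hM.ne', one_lt_div (by positivity)]
    linarith
  linarith

theorem stmt14 (M ℓ E r1 : ℝ) (hM : 0 < M)
    (hE1 : Real.sqrt (8/9) < E) (hE2 : E < 1)
    (hℓ1 : llb M E < ℓ) (hℓ2 : ℓ < lub M E)
    (hr1a : rmaxSch M ℓ < r1) (hr1b : r1 < rminSch M ℓ)
    (hroot : Esch M ℓ r1 = E^2) :
    4*M < r1 :=
  stmt14_general M ℓ E r1 hM hE1 hE2 hr1a hr1b hroot
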